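/- arXiv:1811.05584 — 2 statements merged into one kernel-verified Lean document; each statement's English description precedes it below -/
import Mathlib

section
/- Let p = 3/4, so each ξ_j takes the value 1/√3 with probability 3/4 and the value −√3 with probability 1/4. Then for every n ≥ 1 and every λ ∈ ℝ^n with ∑_{j=1}^n λ_j² = 1 and max_{1≤k≤n} λ_k² ≥ 0.99, one has 𝔼| ∑_{j=1}^n λ_j ξ_j | ≤ 2√((1−p)p) + √(1 − max_k λ_k²) ≤ √3/2 + 1/10 < 0.97. -/
/-- The value of the random variable `ξ_j` associated with `p`: it takes the value
`√((1−p)/p)` (encoded by `true`) and `−√(p/(1−p))` (encoded by `false`). -/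
noncomputable def xiVal (p : ℝ) (b : Bool) : ℝ :=
  if b then Real.sqrt ((1 - p) / p) else -Real.sqrt (p / (1 - p))

/-- The probability weight: `true` (the value `√((1−p)/p)`) has probability `p`,
`false` (the value `−√(p/(1−p))`) has probability `1 − p`. -/
def wt (p : ℝ) (b : Bool) : ℝ := if b then p else 1 - p

/-- `𝔼|∑_{j=1}^n λ_j ξ_j|` for i.i.d. `ξ_1, …, ξ_n` associated with `p`, written as the
explicit expectation over the product space `Bool^n`. -/
noncomputable def expAbsSum (p : ℝ) (n : ℕ) (l : Fin n → ℝ) : ℝ :=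
  ∑ σ : Fin n → Bool, (∏ j, wt p (σ j)) * |∑ j, l j * xiVal p (σ j)|

/-!
Split off a heaviest coordinate `k`: by the triangle inequality
`𝔼|∑ λⱼ ξⱼ| ≤ |λₖ| 𝔼|ξ| + 𝔼|∑_{j ≠ k} λⱼ ξⱼ|`, where `𝔼|ξ| = 2√(p(1-p))`. Since the `ξⱼ` are
independent, centred and normalised, Cauchy–Schwarz bounds the second term by
`(∑_{j ≠ k} λⱼ²)^{1/2} = √(1 - λₖ²)`. For `p = 3/4` and `λₖ² ≥ 0.99` the numerical bounds
follow from `√3 < 1.74`.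
-/

open Finset

section ProductWeight

variable {ι α : Type*} [Fintype ι] [DecidableEq ι] [Fintype α] (w : α → ℝ)

theorem sum_prod_weight_mul_prod (f : ι → α → ℝ) :
    ∑ σ : ι → α, (∏ j, w (σ j)) * ∏ j, f j (σ j) = ∏ j, ∑ a, w a * f j a := by
  rw [Fintype.prod_sum]
  simp only [prod_mul_distrib]

theorem sum_prod_weight (hw : ∑ a, w a = 1) : ∑ σ : ι → α, ∏ j, w (σ j) = 1 := by
  rw [← Fintype.prod_sum]
  simp [hw]

theorem sum_prod_weight_mul_apply (hw : ∑ a, w a = 1) (k : ι) (g : α → ℝ) :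
    ∑ σ : ι → α, (∏ j, w (σ j)) * g (σ k) = ∑ a, w a * g a := by
  simpa [mul_ite, sum_ite_irrel, hw, prod_ite_eq'] using
    sum_prod_weight_mul_prod w fun j a => if j = k then g a else 1

theorem sum_prod_weight_mul_apply_mul_apply (hw : ∑ a, w a = 1) {i k : ι} (hik : i ≠ k)
    (g h : α → ℝ) :
    ∑ σ : ι → α, (∏ j, w (σ j)) * (g (σ i) * h (σ k))
      = (∑ a, w a * g a) * ∑ a, w a * h a := by
  have hfactor : ∀ j, ∑ a, w a * ((if j = i then g a else 1) * (if j = k then h a else 1))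
      = (if j = i then ∑ a, w a * g a else 1) * (if j = k then ∑ a, w a * h a else 1) := by
    intro j
    by_cases hji : j = i
    · simp [hji, hik]
    · by_cases hjk : j = k <;> simp [hji, hjk, hw, hik.symm]
  calc ∑ σ : ι → α, (∏ j, w (σ j)) * (g (σ i) * h (σ k))
      = ∑ σ : ι → α, (∏ j, w (σ j))
          * ∏ j, (if j = i then g (σ j) else 1) * (if j = k then h (σ j) else 1) := by
        simp only [prod_mul_distrib, prod_ite_eq', mem_univ, if_true]
    _ = ∏ j, ∑ a, w a * ((if j = i then g a else 1) * (if j = k then h a else 1)) :=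
        sum_prod_weight_mul_prod w fun j a =>
          (if j = i then g a else 1) * (if j = k then h a else 1)
    _ = (∑ a, w a * g a) * ∑ a, w a * h a := by
        simp only [hfactor, prod_mul_distrib, prod_ite_eq', mem_univ, if_true]

theorem sum_prod_weight_mul_sq_sum (hw : ∑ a, w a = 1) {X : α → ℝ}
    (hX0 : ∑ a, w a * X a = 0) (hX1 : ∑ a, w a * X a ^ 2 = 1) (s : Finset ι) (c : ι → ℝ) :
    ∑ σ : ι → α, (∏ j, w (σ j)) * (∑ j ∈ s, c j * X (σ j)) ^ 2 = ∑ j ∈ s, c j ^ 2 := by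
  have hcov : ∀ i k, ∑ σ : ι → α, (∏ j, w (σ j)) * (X (σ i) * X (σ k))
      = if i = k then 1 else 0 := by
    intro i k
    split_ifs with hik
    · subst hik
      simpa [← sq] using (sum_prod_weight_mul_apply w hw i (X · ^ 2)).trans hX1
    · rw [sum_prod_weight_mul_apply_mul_apply w hw hik, hX0, zero_mul]
  calc ∑ σ : ι → α, (∏ j, w (σ j)) * (∑ j ∈ s, c j * X (σ j)) ^ 2
      = ∑ i ∈ s, ∑ k ∈ s, c i * c k
          * ∑ σ : ι → α, (∏ j, w (σ j)) * (X (σ i) * X (σ k)) := by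
        have hexpand : ∀ σ : ι → α, (∏ j, w (σ j)) * (∑ j ∈ s, c j * X (σ j)) ^ 2
            = ∑ i ∈ s, ∑ k ∈ s, c i * c k * ((∏ j, w (σ j)) * (X (σ i) * X (σ k))) := by
          intro σ
          rw [sq, sum_mul_sum, mul_sum]
          exact sum_congr rfl fun i _ => by rw [mul_sum]; exact sum_congr rfl fun k _ => by ring
        simp only [hexpand, mul_sum]
        rw [sum_comm]
        exact sum_congr rfl fun i _ => sum_comm
    _ = ∑ i ∈ s, c i ^ 2 :=
        sum_congr rfl fun i hi => by simp [hcov, hi, sq]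

end ProductWeight

theorem sum_mul_abs_le_sqrt_sum_mul_sq {β : Type*} (s : Finset β) {W : β → ℝ}
    (hW : ∀ b ∈ s, 0 ≤ W b) (hW1 : ∑ b ∈ s, W b = 1) (F : β → ℝ) :
    ∑ b ∈ s, W b * |F b| ≤ √(∑ b ∈ s, W b * F b ^ 2) := by
  refine Real.le_sqrt_of_sq_le ?_
  have := sum_sq_le_sum_mul_sum_of_sq_le_mul s hW
    (fun b hb => mul_nonneg (hW b hb) (sq_nonneg (F b)))
    (r := fun b => W b * |F b|) fun b _ => by rw [mul_pow, sq_abs]; exact le_of_eq (by ring)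
  rwa [hW1, one_mul] at this

theorem mul_sqrt_div_eq_sqrt_mul {a : ℝ} (ha : 0 < a) (b : ℝ) : a * √(b / a) = √(a * b) := by
  rw [← Real.sqrt_sq ha.le, ← Real.sqrt_mul (sq_nonneg a), Real.sqrt_sq ha.le]
  congr 1
  field_simp

section TwoPoint

variable {p : ℝ}

theorem wt_nonneg (hp0 : 0 ≤ p) (hp1 : p ≤ 1) (b : Bool) : 0 ≤ wt p b := by
  cases b <;> simp [wt, hp0, hp1]

theorem sum_wt (p : ℝ) : ∑ b, wt p b = 1 := by
  simp [wt]

theorem sum_wt_mul_xiVal (hp0 : 0 < p) (hp1 : p < 1) : ∑ b, wt p b * xiVal p b = 0 := by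
  simp [wt, xiVal, mul_sqrt_div_eq_sqrt_mul hp0,
    mul_sqrt_div_eq_sqrt_mul (sub_pos.2 hp1), mul_comm p]

theorem sum_wt_mul_xiVal_sq (hp0 : 0 < p) (hp1 : p < 1) : ∑ b, wt p b * xiVal p b ^ 2 = 1 := by
  have hq : 0 < 1 - p := sub_pos.2 hp1
  simp only [Fintype.sum_bool, wt, xiVal, if_true, Bool.false_eq_true, if_false, neg_sq,
    Real.sq_sqrt (div_nonneg hq.le hp0.le), Real.sq_sqrt (div_nonneg hp0.le hq.le)]
  field_simp
  ring

theorem sum_wt_mul_abs_xiVal (hp0 : 0 < p) (hp1 : p < 1) :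
    ∑ b, wt p b * |xiVal p b| = 2 * √((1 - p) * p) := by
  simp only [Fintype.sum_bool, wt, xiVal, if_true, Bool.false_eq_true, if_false, abs_neg,
    abs_of_nonneg (Real.sqrt_nonneg _), mul_sqrt_div_eq_sqrt_mul hp0,
    mul_sqrt_div_eq_sqrt_mul (sub_pos.2 hp1), mul_comm p]
  ring

theorem expAbsSum_le_two_sqrt_add_sqrt (hp0 : 0 < p) (hp1 : p < 1) {n : ℕ} {l : Fin n → ℝ}
    (hl : ∑ j, l j ^ 2 = 1) (k : Fin n) :
    expAbsSum p n l ≤ 2 * √((1 - p) * p) + √(1 - l k ^ 2) := by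
  set rest : (Fin n → Bool) → ℝ := fun σ => ∑ j ∈ {k}ᶜ, l j * xiVal p (σ j)
  have hW : ∀ σ : Fin n → Bool, 0 ≤ ∏ j, wt p (σ j) :=
    fun σ => prod_nonneg fun j _ => wt_nonneg hp0.le hp1.le (σ j)
  have hrest : ∑ j ∈ {k}ᶜ, l j ^ 2 = 1 - l k ^ 2 := by
    rw [← hl, Fintype.sum_eq_add_sum_compl k]
    ring
  have hlk : |l k| ≤ 1 := by
    rw [← sq_le_one_iff_abs_le_one]
    linarith [sum_nonneg fun j (_ : j ∈ ({k}ᶜ : Finset (Fin n))) => sq_nonneg (l j)]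
  calc expAbsSum p n l
      ≤ ∑ σ : Fin n → Bool, (∏ j, wt p (σ j)) * (|l k| * |xiVal p (σ k)|)
          + ∑ σ : Fin n → Bool, (∏ j, wt p (σ j)) * |rest σ| := by
        rw [expAbsSum, ← sum_add_distrib]
        refine sum_le_sum fun σ _ => ?_
        rw [← mul_add, Fintype.sum_eq_add_sum_compl k, ← abs_mul]
        exact mul_le_mul_of_nonneg_left (abs_add_le _ _) (hW σ)
    _ ≤ 1 * (2 * √((1 - p) * p))
          + √(∑ σ : Fin n → Bool, (∏ j, wt p (σ j)) * rest σ ^ 2) := by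
        simp only [mul_left_comm _ |l k|, ← mul_sum]
        rw [sum_prod_weight_mul_apply (wt p) (sum_wt p) k fun b => |xiVal p b|,
          sum_wt_mul_abs_xiVal hp0 hp1]
        gcongr
        exact sum_mul_abs_le_sqrt_sum_mul_sq _ (fun σ _ => hW σ)
          (sum_prod_weight (wt p) (sum_wt p)) rest
    _ = 2 * √((1 - p) * p) + √(1 - l k ^ 2) := by
        rw [sum_prod_weight_mul_sq_sum (wt p) (sum_wt p) (sum_wt_mul_xiVal hp0 hp1)
          (sum_wt_mul_xiVal_sq hp0 hp1), hrest, one_mul]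

end TwoPoint

/-- Let `p = 3/4`.  For every `n ≥ 1` and every unit vector `λ ∈ ℝ^n` with
`max_k λ_k² ≥ 0.99`, one has
`𝔼|∑ λ_j ξ_j| ≤ 2√((1−p)p) + √(1 − max_k λ_k²) ≤ √3/2 + 1/10 < 0.97`. -/
theorem khinchine_deficit_concentrated_case :
    ∀ n : ℕ, 1 ≤ n → ∀ l : Fin n → ℝ, (∑ j, (l j) ^ 2) = 1 →
      (0.99 : ℝ) ≤ (⨆ k, (l k) ^ 2) →
      expAbsSum (3 / 4) n l
          ≤ 2 * Real.sqrt ((1 - 3 / 4) * (3 / 4)) + Real.sqrt (1 - ⨆ k, (l k) ^ 2) ∧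
        2 * Real.sqrt ((1 - 3 / 4) * (3 / 4)) + Real.sqrt (1 - ⨆ k, (l k) ^ 2)
          ≤ Real.sqrt 3 / 2 + 1 / 10 ∧
        Real.sqrt 3 / 2 + 1 / 10 < 0.97 := by
  intro n hn l hl hmax
  have : Nonempty (Fin n) := ⟨⟨0, hn⟩⟩
  obtain ⟨k, hk⟩ : ∃ k, l k ^ 2 = ⨆ j, l j ^ 2 := exists_eq_ciSup_of_finite
  rw [← hk] at hmax ⊢
  have hpeak : √((1 - 3 / 4) * (3 / 4) : ℝ) = √3 / 4 := by
    rw [show ((1 - 3 / 4) * (3 / 4) : ℝ) = 3 / 4 ^ 2 by norm_num, Real.sqrt_div' _ (by norm_num),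
      Real.sqrt_sq (by norm_num)]
  have htail : √(1 - l k ^ 2) ≤ 1 / 10 := Real.sqrt_le_iff.2 ⟨by norm_num, by linarith⟩
  have hsqrt3 : √3 < 1.74 := (Real.sqrt_lt' (by norm_num)).2 (by norm_num)
  refine ⟨expAbsSum_le_two_sqrt_add_sqrt (by norm_num) (by norm_num) hl k, ?_, by linarith⟩
  rw [hpeak]
  linarith
end

section
/- For every n ≥ 1 and every g : {−1,1}^n → ℝ one has ∫₀^∞ ‖∇(P_t g)‖_∞ dt ≤ (π/2) · ‖g‖_∞. -/
/-- Expectation with respect to the uniform probability measure on the Hamming cube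
`{-1,1}^n`, encoded as `Fin n → Bool`. -/
noncomputable def cubeE {n : ℕ} (f : (Fin n → Bool) → ℝ) : ℝ :=
  (∑ x : Fin n → Bool, f x) / 2 ^ n

/-- The `j`-th discrete partial derivative on the Hamming cube. -/
noncomputable def pderiv {n : ℕ} (j : Fin n) (f : (Fin n → Bool) → ℝ)
    (x : Fin n → Bool) : ℝ :=
  (f (Function.update x j true) - f (Function.update x j false)) / 2

/-- The gradient length `|∇f|(x) = (∑_j (∂_j f(x))²)^{1/2}`. -/
noncomputable def gradLen {n : ℕ} (f : (Fin n → Bool) → ℝ) (x : Fin n → Bool) : ℝ :=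
  Real.sqrt (∑ j, (pderiv j f x) ^ 2)

/-- The sup norm `‖f‖_∞ = max_x |f(x)|` on the Hamming cube. -/
noncomputable def supNorm {n : ℕ} (f : (Fin n → Bool) → ℝ) : ℝ :=
  ⨆ x : Fin n → Bool, |f x|

/-- The coordinate value `x_i = ±1` of a Boolean-encoded cube point. -/
def chi (b : Bool) : ℝ := if b then 1 else -1

/-- The Walsh character `x^S = ∏_{i∈S} x_i`. -/
noncomputable def walsh {n : ℕ} (S : Finset (Fin n)) (x : Fin n → Bool) : ℝ :=
  ∏ i ∈ S, chi (x i)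

/-- The Fourier–Walsh coefficient `f̂(S) = 𝔼[f · x^S]`. -/
noncomputable def walshCoeff {n : ℕ} (f : (Fin n → Bool) → ℝ)
    (S : Finset (Fin n)) : ℝ :=
  cubeE (fun x => f x * walsh S x)

/-- The heat semigroup on the Hamming cube: `P_t f = ∑_S e^{−t|S|} f̂(S) x^S`. -/
noncomputable def heat {n : ℕ} (t : ℝ) (f : (Fin n → Bool) → ℝ)
    (x : Fin n → Bool) : ℝ :=
  ∑ S : Finset (Fin n), Real.exp (-t * S.card) * walshCoeff f S * walsh S x

/-! With `r = e^{-t}`, the heat semigroup is the Markov operator of the product kernel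
`K_r(x, y) = ∏ᵢ (1 + r xᵢ yᵢ) / 2` (Mehler's formula). Differentiating the kernel gives
`∂ⱼ P_t g(x) = ∑_y K_r(x, y) sⱼ(y) g(y)` with scores `sⱼ(y) = r yⱼ / (1 + r xⱼ yⱼ)`, which are
orthogonal in `L²(K_r(x, ·))` with squared norm `r² / (1 - r²)`. Testing against the
unit vector in the direction of `∇P_t g(x)` and applying Cauchy–Schwarz yields
`|∇P_t g| ≤ r / √(1 - r²) · ‖g‖_∞`, and `∫₀^∞ e^{-t} / √(1 - e^{-2t}) dt = arcsin 1 = π / 2`. -/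

open Finset Real MeasureTheory

@[simp] lemma chi_true : chi true = 1 := rfl

@[simp] lemma chi_false : chi false = -1 := rfl

lemma abs_le_supNorm {n : ℕ} (f : (Fin n → Bool) → ℝ) (x : Fin n → Bool) :
    |f x| ≤ supNorm f :=
  le_ciSup (f := fun z => |f z|) (Set.finite_range _).bddAbove x

lemma supNorm_nonneg {n : ℕ} (f : (Fin n → Bool) → ℝ) : 0 ≤ supNorm f :=
  (abs_nonneg _).trans (abs_le_supNorm f fun _ => false)

lemma supNorm_le {n : ℕ} {f : (Fin n → Bool) → ℝ} {C : ℝ} (h : ∀ x, |f x| ≤ C) :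
    supNorm f ≤ C :=
  ciSup_le h

noncomputable def bitKernel (r : ℝ) (a b : Bool) : ℝ := (1 + r * chi a * chi b) / 2

noncomputable def heatKernel {n : ℕ} (r : ℝ) (x y : Fin n → Bool) : ℝ :=
  ∏ i, bitKernel r (x i) (y i)

/-- `∂ₐ log bitKernel r a b`, so that `∂ⱼ K_r(·, y) = K_r(·, y) · bitScore r xⱼ yⱼ`. -/
noncomputable def bitScore (r : ℝ) (a b : Bool) : ℝ := r * chi b / (1 + r * chi a * chi b)

section OneBit

variable {r : ℝ}

lemma bitKernel_pos (hr : |r| < 1) (a b : Bool) : 0 < bitKernel r a b := by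
  obtain ⟨h₁, h₂⟩ := abs_lt.1 hr
  cases a <;> cases b <;> simp only [bitKernel, chi] <;> norm_num <;> linarith

lemma sum_bitKernel (r : ℝ) (a : Bool) : ∑ b, bitKernel r a b = 1 := by
  cases a <;> simp [bitKernel, chi] <;> ring

lemma bitKernel_mul_bitScore (hr : |r| < 1) (a b : Bool) :
    bitKernel r a b * bitScore r a b = r * chi b / 2 := by
  have := bitKernel_pos hr a b
  have : 1 + r * chi a * chi b ≠ 0 := by rw [bitKernel] at this; linarith
  rw [bitKernel, bitScore]
  field_simp

lemma sum_bitKernel_mul_bitScore (hr : |r| < 1) (a : Bool) :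
    ∑ b, bitKernel r a b * bitScore r a b = 0 := by
  simp only [bitKernel_mul_bitScore hr, Fintype.sum_bool, chi_true, chi_false]
  ring

lemma sum_bitKernel_mul_bitScore_sq (hr : |r| < 1) (a : Bool) :
    ∑ b, bitKernel r a b * bitScore r a b ^ 2 = r ^ 2 / (1 - r ^ 2) := by
  obtain ⟨h₁, h₂⟩ := abs_lt.1 hr
  have : 1 - r ≠ 0 := by linarith
  have : 1 + r ≠ 0 := by linarith
  have : 1 - r ^ 2 ≠ 0 := by nlinarith
  have h (b : Bool) : bitKernel r a b * bitScore r a b ^ 2 = r * chi b / 2 * bitScore r a b := by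
    rw [sq, ← mul_assoc, bitKernel_mul_bitScore hr]
  rw [Fintype.sum_bool, h, h]
  cases a <;> simp only [bitScore, chi_true, chi_false, mul_one, mul_neg, neg_neg,
    ← sub_eq_add_neg] <;> field_simp <;> ring

end OneBit

section Kernel

variable {n : ℕ}

lemma sum_heatKernel_mul_prod (r : ℝ) (x : Fin n → Bool) (φ : Fin n → Bool → ℝ) :
    ∑ y, heatKernel r x y * ∏ i, φ i (y i) = ∏ i, ∑ b, bitKernel r (x i) b * φ i b := by
  simp only [heatKernel, ← prod_mul_distrib]
  exact (Fintype.prod_sum fun i b => bitKernel r (x i) b * φ i b).symm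

lemma sum_heatKernel (r : ℝ) (x : Fin n → Bool) : ∑ y, heatKernel r x y = 1 := by
  simpa only [mul_one, prod_const_one, sum_bitKernel] using
    sum_heatKernel_mul_prod r x fun _ _ => 1

lemma heatKernel_nonneg {r : ℝ} (hr : |r| < 1) (x y : Fin n → Bool) : 0 ≤ heatKernel r x y :=
  prod_nonneg fun i _ => (bitKernel_pos hr (x i) (y i)).le

lemma sum_pow_card_mul_walsh_mul_walsh (r : ℝ) (x y : Fin n → Bool) :
    ∑ S : Finset (Fin n), r ^ #S * walsh S x * walsh S y = 2 ^ n * heatKernel r x y := by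
  have h := prod_one_add (f := fun i => r * chi (x i) * chi (y i)) (univ : Finset (Fin n))
  simp only [powerset_univ, prod_mul_distrib, prod_const] at h
  simp only [heatKernel, bitKernel, prod_div_distrib, prod_const, card_univ, Fintype.card_fin]
  rw [mul_div_cancel₀ _ (pow_ne_zero _ two_ne_zero), h]
  rfl

lemma heat_eq_sum_heatKernel (t : ℝ) (g : (Fin n → Bool) → ℝ) (x : Fin n → Bool) :
    heat t g x = ∑ y, heatKernel (exp (-t)) x y * g y := by
  have hexp (S : Finset (Fin n)) : exp (-t * #S) = exp (-t) ^ #S := by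
    rw [mul_comm, exp_nat_mul]
  simp only [heat, walshCoeff, cubeE, hexp, sum_div, mul_sum, sum_mul]
  rw [sum_comm]
  refine sum_congr rfl fun y _ => ?_
  calc ∑ S, exp (-t) ^ #S * (g y * walsh S y / 2 ^ n) * walsh S x
      = (∑ S, exp (-t) ^ #S * walsh S x * walsh S y) * g y / 2 ^ n := by
        rw [sum_mul, sum_div]
        exact sum_congr rfl fun S _ => by ring
    _ = heatKernel (exp (-t)) x y * g y := by
        rw [sum_pow_card_mul_walsh_mul_walsh]
        field_simp

lemma heatKernel_update (r : ℝ) (x y : Fin n → Bool) (j : Fin n) (b : Bool) :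
    heatKernel r (Function.update x j b) y
      = bitKernel r b (y j) * ∏ i ∈ univ \ {j}, bitKernel r (x i) (y i) := by
  simp only [heatKernel, Function.apply_update (fun i a => bitKernel r a (y i)),
    prod_update_of_mem (mem_univ j)]

lemma pderiv_heatKernel {r : ℝ} (hr : |r| < 1) (j : Fin n) (x y : Fin n → Bool) :
    pderiv j (fun x => heatKernel r x y) x = heatKernel r x y * bitScore r (x j) (y j) := by
  have hx := heatKernel_update r x y j (x j)
  rw [Function.update_eq_self] at hx
  rw [pderiv, heatKernel_update, heatKernel_update, hx, mul_right_comm,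
    bitKernel_mul_bitScore hr]
  simp only [bitKernel, chi_true, chi_false]
  ring

lemma pderiv_sum_mul {ι : Type*} [Fintype ι] (j : Fin n) (k : (Fin n → Bool) → ι → ℝ)
    (c : ι → ℝ) (x : Fin n → Bool) :
    pderiv j (fun x => ∑ y, k x y * c y) x = ∑ y, pderiv j (fun x => k x y) x * c y := by
  simp only [pderiv, ← sum_sub_distrib, sum_div]
  exact sum_congr rfl fun y _ => by ring

lemma abs_exp_neg_lt_one {t : ℝ} (ht : 0 < t) : |exp (-t)| < 1 := by
  rw [abs_of_pos (exp_pos _), exp_lt_one_iff]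
  linarith

lemma pderiv_heat {t : ℝ} (ht : 0 < t) (g : (Fin n → Bool) → ℝ) (j : Fin n)
    (x : Fin n → Bool) :
    pderiv j (heat t g) x
      = ∑ y, heatKernel (exp (-t)) x y * bitScore (exp (-t)) (x j) (y j) * g y := by
  rw [funext (heat_eq_sum_heatKernel t g), pderiv_sum_mul]
  simp only [pderiv_heatKernel (abs_exp_neg_lt_one ht)]

end Kernel

section Orthogonality

variable {n : ℕ} {r : ℝ}

lemma sum_heatKernel_mul_apply (x : Fin n → Bool) (j : Fin n) (f : Bool → ℝ) :
    ∑ y, heatKernel r x y * f (y j) = ∑ b, bitKernel r (x j) b * f b := by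
  have h := sum_heatKernel_mul_prod r x fun i b => if i = j then f b else 1
  rw [Fintype.prod_eq_single j fun i hi => by simp only [hi, if_false, mul_one, sum_bitKernel]]
    at h
  simpa only [Fintype.prod_ite_eq', if_true] using h

lemma sum_heatKernel_mul_apply_mul_apply (x : Fin n → Bool) {j k : Fin n} (hjk : j ≠ k)
    (f h : Bool → ℝ) :
    ∑ y, heatKernel r x y * (f (y j) * h (y k))
      = (∑ b, bitKernel r (x j) b * f b) * ∑ b, bitKernel r (x k) b * h b := by
  have factor (i : Fin n) : ∑ b, bitKernel r (x i) b * ((if i = j then f b else 1) *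
      (if i = k then h b else 1)) = (if i = j then ∑ b, bitKernel r (x i) b * f b else 1) *
      (if i = k then ∑ b, bitKernel r (x i) b * h b else 1) := by
    by_cases hij : i = j
    · simp only [if_pos hij, if_neg (hij ▸ hjk : i ≠ k), mul_one]
    · by_cases hik : i = k
      · simp only [if_neg hij, if_pos hik, one_mul]
      · simp only [if_neg hij, if_neg hik, mul_one, sum_bitKernel]
  have key := sum_heatKernel_mul_prod r x
    fun i b => (if i = j then f b else 1) * (if i = k then h b else 1)
  simp only [factor, prod_mul_distrib, Fintype.prod_ite_eq'] at key
  exact key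

lemma sum_heatKernel_mul_bitScore_mul_bitScore (hr : |r| < 1) (x : Fin n → Bool) (j k : Fin n) :
    ∑ y, heatKernel r x y * (bitScore r (x j) (y j) * bitScore r (x k) (y k))
      = if j = k then r ^ 2 / (1 - r ^ 2) else 0 := by
  split_ifs with hjk
  · subst hjk
    simpa only [sq] using
      (sum_heatKernel_mul_apply x j fun b => bitScore r (x j) b ^ 2).trans
        (sum_bitKernel_mul_bitScore_sq hr (x j))
  · rw [sum_heatKernel_mul_apply_mul_apply x hjk, sum_bitKernel_mul_bitScore hr, zero_mul]

end Orthogonality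

section Gradient

variable {n : ℕ}

lemma sum_heatKernel_mul_sum_bitScore_sq {r : ℝ} (hr : |r| < 1) (x : Fin n → Bool)
    (a : Fin n → ℝ) :
    ∑ y, heatKernel r x y * (∑ j, a j * bitScore r (x j) (y j)) ^ 2
      = (∑ j, a j ^ 2) * (r ^ 2 / (1 - r ^ 2)) := by
  calc ∑ y, heatKernel r x y * (∑ j, a j * bitScore r (x j) (y j)) ^ 2
      = ∑ j, ∑ k, a j * a k *
          ∑ y, heatKernel r x y * (bitScore r (x j) (y j) * bitScore r (x k) (y k)) := by
        simp only [sq, sum_mul_sum]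
        simp only [mul_sum]
        rw [sum_comm]
        refine sum_congr rfl fun j _ => ?_
        rw [sum_comm]
        exact sum_congr rfl fun k _ => sum_congr rfl fun y _ => by ring
    _ = (∑ j, a j ^ 2) * (r ^ 2 / (1 - r ^ 2)) := by
        simp only [sum_heatKernel_mul_bitScore_mul_bitScore hr, mul_ite, mul_zero,
          sum_ite_eq, mem_univ, if_true, sum_mul, sq]

lemma sum_heatKernel_mul_sq_le {r : ℝ} (hr : |r| < 1) (x : Fin n → Bool)
    (g : (Fin n → Bool) → ℝ) : ∑ y, heatKernel r x y * g y ^ 2 ≤ supNorm g ^ 2 := by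
  calc ∑ y, heatKernel r x y * g y ^ 2 ≤ ∑ y, heatKernel r x y * supNorm g ^ 2 := by
        refine sum_le_sum fun y _ => mul_le_mul_of_nonneg_left ?_ (heatKernel_nonneg hr x y)
        exact (sq_abs (g y)).symm.trans_le
          (pow_le_pow_left₀ (abs_nonneg _) (abs_le_supNorm g y) 2)
    _ = supNorm g ^ 2 := by rw [← sum_mul, sum_heatKernel, one_mul]

lemma sum_mul_pderiv_heat {t : ℝ} (ht : 0 < t) (g : (Fin n → Bool) → ℝ) (x : Fin n → Bool)
    (a : Fin n → ℝ) :
    ∑ j, a j * pderiv j (heat t g) x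
      = ∑ y, heatKernel (exp (-t)) x y * g y * ∑ j, a j * bitScore (exp (-t)) (x j) (y j) := by
  simp only [pderiv_heat ht, mul_sum]
  rw [sum_comm]
  exact sum_congr rfl fun y _ => sum_congr rfl fun j _ => by ring

lemma gradLen_heat_le {t : ℝ} (ht : 0 < t) (g : (Fin n → Bool) → ℝ) (x : Fin n → Bool) :
    gradLen (heat t g) x ≤ exp (-t) / √(1 - exp (-t) ^ 2) * supNorm g := by
  set r := exp (-t)
  have hr : |r| < 1 := abs_exp_neg_lt_one ht
  have hr2 : 0 < 1 - r ^ 2 := by nlinarith [abs_lt.1 hr, sq_abs r]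
  set c := r ^ 2 / (1 - r ^ 2)
  set D := fun j => pderiv j (heat t g) x
  set U := fun y : Fin n → Bool => ∑ j, D j * bitScore r (x j) (y j)
  set S := ∑ j, D j ^ 2
  set M := supNorm g
  have hK := heatKernel_nonneg hr x
  have hS : S = ∑ y, heatKernel r x y * g y * U y :=
    (sum_congr rfl fun j _ => sq (D j)).trans (sum_mul_pderiv_heat ht g x D)
  have hU : ∑ y, heatKernel r x y * U y ^ 2 = S * c :=
    sum_heatKernel_mul_sum_bitScore_sq hr x D
  have hg := sum_heatKernel_mul_sq_le hr x g
  have hCS : S ^ 2 ≤ M ^ 2 * c * S := by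
    calc S ^ 2 ≤ (∑ y, heatKernel r x y * g y ^ 2) * ∑ y, heatKernel r x y * U y ^ 2 := by
          rw [hS]
          exact sum_sq_le_sum_mul_sum_of_sq_le_mul _ (fun y _ => by have := hK y; positivity)
            (fun y _ => by have := hK y; positivity) fun y _ => le_of_eq (by ring)
      _ ≤ M ^ 2 * ∑ y, heatKernel r x y * U y ^ 2 :=
          mul_le_mul_of_nonneg_right hg (sum_nonneg fun y _ => mul_nonneg (hK y) (sq_nonneg _))
      _ = M ^ 2 * c * S := by rw [hU]; ring
  have hc : 0 ≤ M ^ 2 * c := by positivity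
  have hS0 : 0 ≤ S := sum_nonneg fun j _ => sq_nonneg _
  have hSle : S ≤ M ^ 2 * c := by nlinarith
  show √S ≤ _
  rw [sqrt_le_left (mul_nonneg (by positivity) (supNorm_nonneg g)), mul_pow, div_pow,
    sq_sqrt hr2.le]
  linarith

end Gradient

lemma supNorm_gradLen_heat_le {n : ℕ} {t : ℝ} (ht : 0 < t) (g : (Fin n → Bool) → ℝ) :
    supNorm (gradLen (heat t g)) ≤ exp (-t) / √(1 - exp (-t) ^ 2) * supNorm g :=
  supNorm_le fun x => (abs_of_nonneg (sqrt_nonneg _)).trans_le (gradLen_heat_le ht g x)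

section Integral

lemma continuous_neg_arcsin_exp_neg : Continuous fun s => -arcsin (exp (-s)) := by
  fun_prop

lemma hasDerivAt_neg_arcsin_exp_neg {t : ℝ} (ht : 0 < t) :
    HasDerivAt (fun s => -arcsin (exp (-s))) (exp (-t) / √(1 - exp (-t) ^ 2)) t := by
  have hexp : HasDerivAt (fun s => exp (-s)) (-exp (-t)) t := by
    simpa using (hasDerivAt_neg t).exp
  have harcsin := hasDerivAt_arcsin (neg_one_lt_zero.trans (exp_pos (-t))).ne'
    (exp_lt_one_iff.2 (neg_neg_of_pos ht)).ne
  refine (harcsin.comp t hexp).neg.congr_deriv ?_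
  ring

lemma tendsto_neg_arcsin_exp_neg_atTop :
    Filter.Tendsto (fun s => -arcsin (exp (-s))) Filter.atTop (nhds 0) := by
  simpa using ((continuous_arcsin.tendsto 0).comp tendsto_exp_neg_atTop_nhds_zero).neg

lemma integrableOn_exp_neg_div_sqrt :
    IntegrableOn (fun t => exp (-t) / √(1 - exp (-t) ^ 2)) (Set.Ioi 0) :=
  integrableOn_Ioi_deriv_of_nonneg continuous_neg_arcsin_exp_neg.continuousWithinAt
    (fun _ ht => hasDerivAt_neg_arcsin_exp_neg ht) (fun _ _ => by positivity)
    tendsto_neg_arcsin_exp_neg_atTop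

lemma integral_exp_neg_div_sqrt :
    ∫ t in Set.Ioi 0, exp (-t) / √(1 - exp (-t) ^ 2) = π / 2 := by
  rw [integral_Ioi_of_hasDerivAt_of_nonneg continuous_neg_arcsin_exp_neg.continuousWithinAt
    (fun _ ht => hasDerivAt_neg_arcsin_exp_neg ht) (fun _ _ => by positivity)
    tendsto_neg_arcsin_exp_neg_atTop]
  simp

end Integral

theorem integral_grad_heat_sup_bound_general (n : ℕ)
    (g : (Fin n → Bool) → ℝ) :
    ∫⁻ t in Set.Ioi (0 : ℝ), ENNReal.ofReal (supNorm (gradLen (heat t g)))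
      ≤ ENNReal.ofReal (Real.pi / 2 * supNorm g) := by
  calc ∫⁻ t in Set.Ioi (0 : ℝ), ENNReal.ofReal (supNorm (gradLen (heat t g)))
      ≤ ∫⁻ t in Set.Ioi (0 : ℝ), ENNReal.ofReal (exp (-t) / √(1 - exp (-t) ^ 2) * supNorm g) :=
        setLIntegral_mono' measurableSet_Ioi fun t ht =>
          ENNReal.ofReal_le_ofReal (supNorm_gradLen_heat_le ht g)
    _ = ENNReal.ofReal (∫ t in Set.Ioi 0, exp (-t) / √(1 - exp (-t) ^ 2) * supNorm g) :=
        (ofReal_integral_eq_lintegral_ofReal (integrableOn_exp_neg_div_sqrt.mul_const _)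
          (ae_of_all _ fun _ => mul_nonneg (by positivity) (supNorm_nonneg g))).symm
    _ = ENNReal.ofReal (Real.pi / 2 * supNorm g) := by
        rw [integral_mul_const, integral_exp_neg_div_sqrt]

/-- For every `n ≥ 1` and every `g : {−1,1}^n → ℝ`,
`∫₀^∞ ‖∇(P_t g)‖_∞ dt ≤ (π/2) ‖g‖_∞` (stated with the lower Lebesgue integral of the
nonnegative integrand). -/
theorem integral_grad_heat_sup_bound (n : ℕ) (hn : 1 ≤ n)
    (g : (Fin n → Bool) → ℝ) :
    ∫⁻ t in Set.Ioi (0 : ℝ), ENNReal.ofReal (supNorm (gradLen (heat t g)))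
      ≤ ENNReal.ofReal (Real.pi / 2 * supNorm g) :=
  integral_grad_heat_sup_bound_general n g
end
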